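/- Let G be a connected cubic graph and let T be a triangle of G such that every vertex of T lies in some triangle of G other than T. Then G is isomorphic to K4. -/

import Mathlib

/-!
Each vertex `v` of the triangle `T` has exactly one neighbour outside `T`. A second triangle
through `v` must use that neighbour together with another vertex of `T`, so the outside
neighbour of `v` is shared with another vertex of `T`; on three vertices this forces one common
outside neighbour `d`. Then `T ∪ {d}` is a `4`-clique in a cubic graph, hence closed under
adjacency, hence everything by connectedness.
-/

open Finset

lemma Finset.exists_common_of_card_eq_three {α β : Type*} [DecidableEq α] {T : Finset α}
    (hT : #T = 3) {P : α → β → Prop} (huniq : ∀ v ∈ T, ∀ x y, P v x → P v y → x = y)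
    (hshare : ∀ v ∈ T, ∃ w ∈ T, w ≠ v ∧ ∃ x, P v x ∧ P w x) :
    ∃ x, ∀ v ∈ T, P v x := by
  obtain ⟨a, ha⟩ : T.Nonempty := card_pos.1 (by omega)
  obtain ⟨w, hw, hwa, x, hax, hwx⟩ := hshare a ha
  refine ⟨x, fun v hv => ?_⟩
  by_cases hva : v = a
  · exact hva ▸ hax
  by_cases hvw : v = w
  · exact hvw ▸ hwx
  have hTeq : T = {v, a, w} := (eq_of_subset_of_card_le (by simp [insert_subset_iff, *])
    (hT.trans (card_eq_three.2 ⟨v, a, w, hva, hvw, Ne.symm hwa, rfl⟩).symm).le).symm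
  obtain ⟨u, hu, huv, y, hvy, huy⟩ := hshare v hv
  have hux : P u x := by
    rw [hTeq] at hu
    simp only [mem_insert, mem_singleton, huv, false_or] at hu
    rcases hu with rfl | rfl
    exacts [hax, hwx]
  exact huniq u hu y x huy hux ▸ hvy

namespace SimpleGraph

variable {V : Type*} {G : SimpleGraph V}

lemma Preconnected.eq_univ_of_adj_mem (hG : G.Preconnected) {S : Set V} (hS : S.Nonempty)
    (hclosed : ∀ v ∈ S, ∀ w, G.Adj v w → w ∈ S) : S = Set.univ := by
  refine Set.eq_univ_of_forall fun w => by_contra fun hw => ?_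
  obtain ⟨u, hu⟩ := hS
  obtain ⟨p⟩ := hG u w
  obtain ⟨d, -, hd, hd'⟩ := p.exists_boundary_dart S hu hw
  exact hd' (hclosed _ hd _ d.adj)

variable [Fintype V] [DecidableEq V] [DecidableRel G.Adj] {n : ℕ} {S T T' : Finset V}
  {v x y : V}

lemma IsNClique.neighborFinset_eq_erase (hS : G.IsNClique (n + 1) S) (hv : v ∈ S)
    (hdeg : G.degree v = n) : G.neighborFinset v = S.erase v := by
  refine (eq_of_subset_of_card_le (fun w hw => ?_) ?_).symm
  · rw [mem_erase] at hw
    exact (mem_neighborFinset ..).2 (hS.isClique hv hw.2 hw.1.symm)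
  · rw [card_neighborFinset_eq_degree, hdeg, card_erase_of_mem hv, hS.card_eq,
      Nat.add_sub_cancel]

lemma IsNClique.neighborFinset_eq_insert_erase (hT : G.IsNClique n T) (hv : v ∈ T)
    (hdeg : G.degree v = n) (hx : x ∉ T) (hvx : G.Adj v x) :
    G.neighborFinset v = insert x (T.erase v) := by
  have hn : 0 < n := hT.card_eq ▸ card_pos.2 ⟨v, hv⟩
  refine (eq_of_subset_of_card_le (fun w hw => ?_) ?_).symm
  · rcases mem_insert.1 hw with rfl | hw
    · exact (mem_neighborFinset ..).2 hvx
    · rw [mem_erase] at hw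
      exact (mem_neighborFinset ..).2 (hT.isClique hv hw.2 hw.1.symm)
  · rw [card_neighborFinset_eq_degree, hdeg,
      card_insert_of_notMem (fun h => hx (mem_of_mem_erase h)), card_erase_of_mem hv, hT.card_eq]
    omega

lemma IsNClique.eq_of_adj_of_notMem (hT : G.IsNClique n T) (hv : v ∈ T)
    (hdeg : G.degree v = n) (hx : x ∉ T) (hy : y ∉ T) (hvx : G.Adj v x) (hvy : G.Adj v y) :
    y = x := by
  have hyN : y ∈ G.neighborFinset v := (mem_neighborFinset ..).2 hvy
  rw [hT.neighborFinset_eq_insert_erase hv hdeg hx hvx, mem_insert] at hyN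
  exact hyN.resolve_right fun h => hy (mem_of_mem_erase h)

lemma IsNClique.exists_adj_notMem_of_ne (hT : G.IsNClique n T) (hT' : G.IsNClique n T')
    (hn : 3 ≤ n) (hne : T' ≠ T) (hv : v ∈ T) (hv' : v ∈ T') (hdeg : G.degree v = n) :
    ∃ x ∉ T, ∃ w ∈ T, w ≠ v ∧ G.Adj v x ∧ G.Adj w x := by
  obtain ⟨x, hx', hx⟩ : ∃ x ∈ T', x ∉ T := not_subset.1 fun hsub =>
    hne (eq_of_subset_of_card_le hsub (by rw [hT.card_eq, hT'.card_eq]))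
  have hvx : G.Adj v x := hT'.isClique hv' hx' (ne_of_mem_of_not_mem hv hx)
  obtain ⟨w, hw', hwvx⟩ : ∃ w ∈ T', w ∉ ({v, x} : Finset V) :=
    exists_mem_notMem_of_card_lt_card (by rw [hT'.card_eq]; exact (card_le_two).trans_lt hn)
  simp only [mem_insert, mem_singleton, not_or] at hwvx
  have hwN : w ∈ G.neighborFinset v :=
    (mem_neighborFinset ..).2 (hT'.isClique hv' hw' (Ne.symm hwvx.1))
  rw [hT.neighborFinset_eq_insert_erase hv hdeg hx hvx, mem_insert, mem_erase] at hwN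
  obtain ⟨hwv, hw⟩ := hwN.resolve_left hwvx.2
  exact ⟨x, hx, w, hw, hwv, hvx, hT'.isClique hw' hx' hwvx.2⟩

theorem Connected.nonempty_iso_top_of_isRegularOfDegree_of_isNClique (hG : G.Connected)
    (hreg : G.IsRegularOfDegree n) (hS : G.IsNClique (n + 1) S) :
    Nonempty (G ≃g (⊤ : SimpleGraph (Fin (n + 1)))) := by
  have huniv : (S : Set V) = Set.univ := by
    refine hG.preconnected.eq_univ_of_adj_mem ?_ fun v hv w hvw => ?_
    · exact coe_nonempty.2 (card_pos.1 (hS.card_eq ▸ n.succ_pos))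
    · have hwN : w ∈ G.neighborFinset v := (mem_neighborFinset ..).2 hvw
      rw [hS.neighborFinset_eq_erase hv (hreg v)] at hwN
      exact mem_of_mem_erase hwN
  have hcard : Fintype.card V = n + 1 := by
    rw [← card_univ, ← coe_eq_univ.1 huniv, hS.card_eq]
  obtain rfl : G = ⊤ := isClique_univ.1 (huniv ▸ hS.isClique)
  exact ⟨Iso.completeGraph (Fintype.equivFinOfCardEq hcard)⟩

end SimpleGraph

open SimpleGraph

/-- If `T` is a triangle of a connected cubic graph `G` such that every vertex of `T`
lies in some triangle of `G` other than `T`, then `G` is isomorphic to `K₄`. -/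
theorem stmt_3 {V : Type*} [Fintype V] [DecidableEq V] (G : SimpleGraph V)
    [DecidableRel G.Adj] (hconn : G.Connected) (hcubic : ∀ v, G.degree v = 3)
    (T : Finset V) (hT : G.IsNClique 3 T)
    (h : ∀ v ∈ T, ∃ T' : Finset V, G.IsNClique 3 T' ∧ T' ≠ T ∧ v ∈ T') :
    Nonempty (G ≃g (⊤ : SimpleGraph (Fin 4))) := by
  have hshare :
      ∀ v ∈ T, ∃ w ∈ T, w ≠ v ∧ ∃ x, (x ∉ T ∧ G.Adj v x) ∧ (x ∉ T ∧ G.Adj w x) := by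
    intro v hv
    obtain ⟨T', hT', hne, hv'⟩ := h v hv
    obtain ⟨x, hx, w, hw, hwv, hvx, hwx⟩ :=
      hT.exists_adj_notMem_of_ne hT' le_rfl hne hv hv' (hcubic v)
    exact ⟨w, hw, hwv, x, ⟨hx, hvx⟩, hx, hwx⟩
  obtain ⟨d, hd⟩ := exists_common_of_card_eq_three hT.card_eq
    (fun v hv x y hx hy => hT.eq_of_adj_of_notMem hv (hcubic v) hy.1 hx.1 hy.2 hx.2) hshare
  have hK4 : G.IsNClique 4 (insert d T) := hT.insert fun v hv => (hd v hv).2.symm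
  exact hconn.nonempty_iso_top_of_isRegularOfDegree_of_isNClique hcubic hK4
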